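/- Let E be a nonzero finite-dimensional complex Hilbert space, U a unitary operator on E and P an orthogonal projection on E, and let W_Φ, W_Ψ be the commuting isometries on ℓ²(ℕ, E) with symbols Φ(z) = (P + z(I−P)) U* and Ψ(z) = U((I−P) + z P). Then for every finitely supported function c : ℕ × ℕ → ℂ, ‖∑_{(i,j)} c(i,j) W_Φ^i W_Ψ^j‖ ≤ sup_{z ∈ ℂ, |z| = 1} ‖∑_{(i,j)} c(i,j) Φ(z)^i Ψ(z)^j‖. -/

import Mathlib

/-!
Identify a finitely supported sequence `g` in `ℓ²(ℕ, E)` with its generating polynomial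
`g(z) = ∑ zⁿ gₙ`, an element of `PolynomialModule ℂ E`. By Parseval, `‖g‖²` is the average of
`‖g(z)‖²` over the unit circle. Each of `W_Φ`, `W_Ψ`, and hence every polynomial expression `W` in
them, maps finitely supported sequences to finitely supported ones and acts on generating
polynomials as multiplication by its operator-valued symbol `φ(z)`. Averaging
`‖φ(z) g(z)‖² ≤ (sup_{|w|=1} ‖φ(w)‖)² ‖g(z)‖²` over the circle gives `‖W g‖ ≤ sup ‖φ‖ · ‖g‖`
on the dense subspace of finitely supported sequences.
-/

open ContinuousLinearMap
open scoped ENNReal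

set_option linter.unusedSectionVars false

noncomputable section

/-- `W` is the analytic (degree-one) Toeplitz operator on `ℓ²(ℕ, E)` with symbol
`φ(z) = a + z b`, i.e. `(W f)(0) = a (f 0)` and `(W f)(n) = a (f n) + b (f (n-1))`
for `n ≥ 1`. -/
def IsToeplitz {E : Type*} [NormedAddCommGroup E] [InnerProductSpace ℂ E]
    (a b : E →L[ℂ] E)
    (W : lp (fun _ : ℕ => E) 2 →L[ℂ] lp (fun _ : ℕ => E) 2) : Prop :=
  ∀ f : lp (fun _ : ℕ => E) 2,
    (W f : ∀ _ : ℕ, E) 0 = a ((f : ∀ _ : ℕ, E) 0) ∧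
    ∀ n : ℕ, (W f : ∀ _ : ℕ, E) (n + 1) =
      a ((f : ∀ _ : ℕ, E) (n + 1)) + b ((f : ∀ _ : ℕ, E) n)

open Complex Real
open Polynomial
open scoped ComplexConjugate lp

theorem circleAverage_conj_pow_mul_pow (m n : ℕ) :
    circleAverage (fun z : ℂ => conj z ^ m * z ^ n) 0 1 = if m = n then 1 else 0 := by
  set k : ℤ := n - m
  have hexp : ∀ θ : ℝ, conj (circleMap 0 1 θ) ^ m * circleMap 0 1 θ ^ n = exp ((k * I) * θ) := by
    intro θ
    rw [circleMap_zero, ofReal_one, one_mul, ← exp_conj, ← Complex.exp_nat_mul,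
      ← Complex.exp_nat_mul, ← Complex.exp_add]
    simp only [k, map_mul, conj_ofReal, conj_I]
    push_cast; ring_nf
  rw [circleAverage_def]
  simp_rw [hexp]
  split_ifs with hmn
  · simp [k, hmn, field]
  · have hne : (k : ℂ) * I ≠ 0 := mul_ne_zero (by simp [k, sub_eq_zero]; omega) I_ne_zero
    rw [integral_exp_mul_complex hne, ofReal_mul, ofReal_ofNat,
      show (k : ℂ) * I * (2 * π) = k * (2 * π * I) by ring, exp_int_mul_two_pi_mul_I]
    simp

namespace PolynomialModule

section CommRing

variable {R M : Type*} [CommRing R] [AddCommGroup M] [Module R M]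

theorem coeff_map_apply (f : M →ₗ[R] M) (q : PolynomialModule R M) (n : ℕ) :
    (map R f q).coeff n = f (q.coeff n) :=
  rfl

theorem coeff_X_smul_zero (q : PolynomialModule R M) : ((X : R[X]) • q).coeff 0 = 0 := by
  simp [← monomial_one_one_eq_X]

theorem coeff_X_smul_succ (q : PolynomialModule R M) (n : ℕ) :
    ((X : R[X]) • q).coeff (n + 1) = q.coeff n := by
  simp [← monomial_one_one_eq_X]

end CommRing

section NormedSpace

variable {E : Type*} [NormedAddCommGroup E] [NormedSpace ℂ E]

def toL2 : PolynomialModule ℂ E →ₗ[ℂ] ℓ²(ℕ, E) :=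
  Finsupp.lsum ℂ (fun n => (lp.singleContinuousLinearMap ℂ (fun _ : ℕ => E) 2 n).toLinearMap)
    ∘ₗ (coeffLinearEquiv ℂ ℂ).toLinearMap

theorem toL2_single (n : ℕ) (v : E) : toL2 (single ℂ n v) = lp.single 2 n v := by
  simp [toL2]

theorem toL2_apply (g : PolynomialModule ℂ E) :
    toL2 g = ∑ n ∈ g.coeff.support, lp.single 2 n (g.coeff n) := by
  simp [toL2, Finsupp.sum]

theorem coe_toL2 (g : PolynomialModule ℂ E) : ⇑(toL2 g) = ⇑g.coeff := by
  funext n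
  rw [toL2_apply, lp.coeFn_sum, Finset.sum_apply]
  simp [lp.single_apply, Finset.sum_pi_single]

theorem norm_toL2_sq (g : PolynomialModule ℂ E) :
    ‖toL2 g‖ ^ 2 = ∑ n ∈ g.coeff.support, ‖g.coeff n‖ ^ 2 := by
  have h := lp.norm_sum_single (p := 2) (by norm_num) g.coeff g.coeff.support
  rw [← toL2_apply] at h
  exact_mod_cast h

theorem denseRange_toL2 : DenseRange (toL2 : PolynomialModule ℂ E → ℓ²(ℕ, E)) := by
  intro f
  refine mem_closure_of_tendsto (lp.hasSum_single ENNReal.ofNat_ne_top f) (.of_forall fun s => ?_)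
  exact ⟨∑ n ∈ s, single ℂ n (f n), by simp [toL2_single]⟩

@[fun_prop]
theorem continuous_eval (g : PolynomialModule ℂ E) : Continuous fun z : ℂ => eval z g := by
  simp only [eval_apply, Finsupp.sum]
  fun_prop

end NormedSpace

section InnerProductSpace

variable {E : Type*} [NormedAddCommGroup E] [InnerProductSpace ℂ E]

theorem circleAverage_norm_eval_sq (g : PolynomialModule ℂ E) :
    circleAverage (fun z => ‖eval z g‖ ^ 2) 0 1 = ‖toL2 g‖ ^ 2 := by
  set S := g.coeff.support
  have expand : ∀ z : ℂ, ((‖eval z g‖ ^ 2 : ℝ) : ℂ)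
      = ∑ m ∈ S, ∑ n ∈ S, inner ℂ (g.coeff m) (g.coeff n) • (conj z ^ m * z ^ n) := by
    intro z
    have norm_sq : ((‖eval z g‖ ^ 2 : ℝ) : ℂ) = inner ℂ (eval z g) (eval z g) := by
      rw [inner_self_eq_norm_sq_to_K]; push_cast; rfl
    rw [norm_sq, eval_apply, Finsupp.sum, sum_inner]
    refine Finset.sum_congr rfl fun m _ => ?_
    rw [inner_sum]
    refine Finset.sum_congr rfl fun n _ => ?_
    rw [inner_smul_left, inner_smul_right, map_pow, smul_eq_mul]
    ring
  apply ofReal_injective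
  calc ((circleAverage (fun z => ‖eval z g‖ ^ 2) 0 1 : ℝ) : ℂ)
      = circleAverage (fun z => ((‖eval z g‖ ^ 2 : ℝ) : ℂ)) 0 1 := by
        rw [← ofRealCLM_apply, ← ofRealCLM.circleAverage_comp_comm
          (by fun_prop : Continuous fun z => ‖eval z g‖ ^ 2).continuousOn.circleIntegrable']
        rfl
    _ = ∑ m ∈ S, ∑ n ∈ S, inner ℂ (g.coeff m) (g.coeff n) *
          circleAverage (fun z : ℂ => conj z ^ m * z ^ n) 0 1 := by
        simp_rw [expand]
        rw [circleAverage_fun_sum fun m _ => by fun_prop]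
        refine Finset.sum_congr rfl fun m _ => ?_
        rw [circleAverage_fun_sum fun n _ => by fun_prop]
        simp_rw [circleAverage_fun_smul, smul_eq_mul]
    _ = ((‖toL2 g‖ ^ 2 : ℝ) : ℂ) := by
        simp [S, circleAverage_conj_pow_mul_pow, norm_toL2_sq, inner_self_eq_norm_sq_to_K]

theorem norm_toL2_le_of_norm_eval_le {g h : PolynomialModule ℂ E} {M : ℝ} (hM : 0 ≤ M)
    (hgh : ∀ z : ℂ, ‖z‖ = 1 → ‖eval z h‖ ≤ M * ‖eval z g‖) : ‖toL2 h‖ ≤ M * ‖toL2 g‖ := by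
  refine (pow_le_pow_iff_left₀ (norm_nonneg _) (by positivity) two_ne_zero).1 ?_
  calc ‖toL2 h‖ ^ 2 = circleAverage (fun z => ‖eval z h‖ ^ 2) 0 1 :=
        (circleAverage_norm_eval_sq h).symm
    _ ≤ circleAverage (fun z => M ^ 2 • ‖eval z g‖ ^ 2) 0 1 := by
        refine circleAverage_mono (by fun_prop : Continuous _).continuousOn.circleIntegrable'
          (by fun_prop : Continuous _).continuousOn.circleIntegrable' fun z hz => ?_
        rw [abs_one, mem_sphere_zero_iff_norm] at hz
        rw [smul_eq_mul, ← mul_pow]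
        exact pow_le_pow_left₀ (norm_nonneg _) (hgh z hz) 2
    _ = (M * ‖toL2 g‖) ^ 2 := by
        rw [circleAverage_fun_smul, circleAverage_norm_eval_sq, smul_eq_mul, mul_pow]

end InnerProductSpace

end PolynomialModule

open PolynomialModule

section NormedSpace

variable {E : Type*} [NormedAddCommGroup E] [NormedSpace ℂ E]

def HasAnalyticSymbol (W : ℓ²(ℕ, E) →L[ℂ] ℓ²(ℕ, E)) (φ : ℂ → E →L[ℂ] E) : Prop :=
  ∀ g : PolynomialModule ℂ E, ∃ h, W (toL2 g) = toL2 h ∧ ∀ z, eval z h = φ z (eval z g)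

namespace HasAnalyticSymbol

variable {W W₁ W₂ : ℓ²(ℕ, E) →L[ℂ] ℓ²(ℕ, E)} {φ φ₁ φ₂ : ℂ → E →L[ℂ] E}

theorem zero : HasAnalyticSymbol (0 : ℓ²(ℕ, E) →L[ℂ] ℓ²(ℕ, E)) fun _ => 0 :=
  fun _ => ⟨0, by simp, by simp⟩

theorem one : HasAnalyticSymbol (1 : ℓ²(ℕ, E) →L[ℂ] ℓ²(ℕ, E)) fun _ => 1 :=
  fun g => ⟨g, rfl, fun _ => rfl⟩

theorem add (h₁ : HasAnalyticSymbol W₁ φ₁) (h₂ : HasAnalyticSymbol W₂ φ₂) :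
    HasAnalyticSymbol (W₁ + W₂) fun z => φ₁ z + φ₂ z := by
  intro g
  obtain ⟨k₁, hW₁, hφ₁⟩ := h₁ g
  obtain ⟨k₂, hW₂, hφ₂⟩ := h₂ g
  exact ⟨k₁ + k₂, by simp [hW₁, hW₂], fun z => by simp [hφ₁, hφ₂]⟩

theorem const_smul (c : ℂ) (hW : HasAnalyticSymbol W φ) :
    HasAnalyticSymbol (c • W) fun z => c • φ z := by
  intro g
  obtain ⟨k, hWk, hφk⟩ := hW g
  exact ⟨c • k, by simp [hWk], fun z => by simp [hφk]⟩

theorem mul (h₁ : HasAnalyticSymbol W₁ φ₁) (h₂ : HasAnalyticSymbol W₂ φ₂) :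
    HasAnalyticSymbol (W₁ * W₂) fun z => φ₁ z * φ₂ z := by
  intro g
  obtain ⟨k₂, hW₂, hφ₂⟩ := h₂ g
  obtain ⟨k₁, hW₁, hφ₁⟩ := h₁ k₂
  exact ⟨k₁, by simp [hW₂, hW₁], fun z => by simp [hφ₁, hφ₂]⟩

theorem pow (hW : HasAnalyticSymbol W φ) (n : ℕ) :
    HasAnalyticSymbol (W ^ n) fun z => φ z ^ n := by
  induction n with
  | zero => simpa using one
  | succ n ih => simpa [pow_succ] using ih.mul hW

theorem sum {ι : Type*} (s : Finset ι) {W : ι → ℓ²(ℕ, E) →L[ℂ] ℓ²(ℕ, E)}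
    {φ : ι → ℂ → E →L[ℂ] E} (h : ∀ i ∈ s, HasAnalyticSymbol (W i) (φ i)) :
    HasAnalyticSymbol (∑ i ∈ s, W i) fun z => ∑ i ∈ s, φ i z := by
  classical
  induction s using Finset.induction_on with
  | empty => simpa using zero
  | insert i s hi ih =>
    simp_rw [Finset.sum_insert hi]
    exact (h i (s.mem_insert_self i)).add (ih fun j hj => h j (Finset.mem_insert_of_mem hj))

end HasAnalyticSymbol

end NormedSpace

section InnerProductSpace

variable {E : Type*} [NormedAddCommGroup E] [InnerProductSpace ℂ E]

theorem IsToeplitz.hasAnalyticSymbol {a b : E →L[ℂ] E} {W : ℓ²(ℕ, E) →L[ℂ] ℓ²(ℕ, E)}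
    (hW : IsToeplitz a b W) : HasAnalyticSymbol W fun z => a + z • b := by
  intro g
  refine ⟨map ℂ (a : E →ₗ[ℂ] E) g + (X : ℂ[X]) • map ℂ (b : E →ₗ[ℂ] E) g, ?_,
    fun z => ?_⟩
  · refine lp.ext (funext fun n => ?_)
    cases n with
    | zero =>
      rw [coe_toL2, (hW _).1, coe_toL2, PolynomialModule.coeff_add, Finsupp.add_apply,
        coeff_map_apply, coeff_X_smul_zero, add_zero]
      rfl
    | succ n =>
      rw [coe_toL2, (hW _).2 n, coe_toL2, PolynomialModule.coeff_add, Finsupp.add_apply,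
        coeff_map_apply, coeff_X_smul_succ, coeff_map_apply]
      rfl
  · simp

theorem HasAnalyticSymbol.norm_le {W : ℓ²(ℕ, E) →L[ℂ] ℓ²(ℕ, E)} {φ : ℂ → E →L[ℂ] E}
    (hW : HasAnalyticSymbol W φ) (hφ : Continuous φ) :
    ‖W‖ ≤ ⨆ z : {w : ℂ // ‖w‖ = 1}, ‖φ z‖ := by
  set M := ⨆ z : {w : ℂ // ‖w‖ = 1}, ‖φ z‖
  have bdd : BddAbove (Set.range fun z : {w : ℂ // ‖w‖ = 1} => ‖φ z‖) := by
    refine ((isCompact_sphere (0 : ℂ) 1).image (continuous_norm.comp hφ)).bddAbove.mono ?_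
    rintro _ ⟨z, rfl⟩
    exact ⟨z, by simpa using z.2, rfl⟩
  have le_M : ∀ z : ℂ, ‖z‖ = 1 → ‖φ z‖ ≤ M := fun z hz => le_ciSup bdd ⟨z, hz⟩
  have hM : 0 ≤ M := (norm_nonneg _).trans (le_M 1 norm_one)
  refine W.opNorm_le_bound hM fun f => denseRange_toL2.induction_on f
    (isClosed_le (by fun_prop) (by fun_prop)) fun g => ?_
  obtain ⟨h, hWg, hφh⟩ := hW g
  rw [hWg]
  refine norm_toL2_le_of_norm_eval_le hM fun z hz => ?_
  rw [hφh]
  exact (φ z).le_of_opNorm_le (le_M z hz) _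

end InnerProductSpace

theorem bcl_von_neumann_boundary_general
    {E : Type*} [NormedAddCommGroup E] [InnerProductSpace ℂ E]
    [FiniteDimensional ℂ E]
    (U P : E →L[ℂ] E)
    (WΦ WΨ : lp (fun _ : ℕ => E) 2 →L[ℂ] lp (fun _ : ℕ => E) 2)
    (hWΦ : IsToeplitz (P ∘L adjoint U) ((1 - P) ∘L adjoint U) WΦ)
    (hWΨ : IsToeplitz (U ∘L (1 - P)) (U ∘L P) WΨ)
    (c : (ℕ × ℕ) →₀ ℂ) :
    ‖c.sum fun p coeff => coeff • (WΦ ^ p.1 * WΨ ^ p.2)‖ ≤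
      ⨆ z : {w : ℂ // ‖w‖ = 1},
        ‖c.sum fun p coeff =>
          coeff • (((P + (z : ℂ) • (1 - P)) * adjoint U) ^ p.1 *
            (U * ((1 - P) + (z : ℂ) • P)) ^ p.2)‖ := by
  have hΦ : HasAnalyticSymbol WΦ fun z => (P + z • (1 - P)) * adjoint U := by
    convert hWΦ.hasAnalyticSymbol using 2 with z
    rw [add_mul, smul_mul_assoc]
    rfl
  have hΨ : HasAnalyticSymbol WΨ fun z => U * ((1 - P) + z • P) := by
    convert hWΨ.hasAnalyticSymbol using 2 with z
    rw [mul_add, mul_smul_comm]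
    rfl
  have hW := HasAnalyticSymbol.sum c.support fun p _ =>
    ((hΦ.pow p.1).mul (hΨ.pow p.2)).const_smul (c p)
  exact hW.norm_le (by fun_prop)

/-- von Neumann inequality over the boundary for the Berger–Coburn–Lebow pair: for the
commuting isometries `W_Φ, W_Ψ` on `ℓ²(ℕ, E)` with symbols `Φ(z) = (P + z(I−P)) U*` and
`Ψ(z) = U((I−P) + z P)` (with `E` nonzero finite dimensional), every polynomial expression
satisfies `‖∑ c(i,j) W_Φ^i W_Ψ^j‖ ≤ sup_{|z|=1} ‖∑ c(i,j) Φ(z)^i Ψ(z)^j‖`. -/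
theorem bcl_von_neumann_boundary
    {E : Type*} [NormedAddCommGroup E] [InnerProductSpace ℂ E]
    [Nontrivial E] [FiniteDimensional ℂ E]
    (U P : E →L[ℂ] E)
    (hU₁ : adjoint U * U = 1) (hU₂ : U * adjoint U = 1)
    (hP₁ : IsSelfAdjoint P) (hP₂ : P * P = P)
    (WΦ WΨ : lp (fun _ : ℕ => E) 2 →L[ℂ] lp (fun _ : ℕ => E) 2)
    (hWΦ : IsToeplitz (P ∘L adjoint U) ((1 - P) ∘L adjoint U) WΦ)
    (hWΨ : IsToeplitz (U ∘L (1 - P)) (U ∘L P) WΨ)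
    (c : (ℕ × ℕ) →₀ ℂ) :
    ‖c.sum fun p coeff => coeff • (WΦ ^ p.1 * WΨ ^ p.2)‖ ≤
      ⨆ z : {w : ℂ // ‖w‖ = 1},
        ‖c.sum fun p coeff =>
          coeff • (((P + (z : ℂ) • (1 - P)) * adjoint U) ^ p.1 *
            (U * ((1 - P) + (z : ℂ) • P)) ^ p.2)‖ :=
  bcl_von_neumann_boundary_general U P WΦ WΨ hWΦ hWΨ c
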